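/- (Bonnet–Sykora) Let G = (V, E) be a finite simple graph. The δ-sequence of G is symmetric (i.e., δ_G(i) + δ_G(|V| − i + 1) = δ_G(|V|) for all i ∈ {1, …, |V|}) if and only if G is regular. -/

import Mathlib

/-!
In a `d`-regular graph, complementation `A ↦ Aᶜ` is a bijection from `m`-sets to `(n - m)`-sets
that changes the number of inner edges by the constant `#E - d m`, so
`I(n - m) = #E + I(m) - d m`; substituting this for `m = i` and `m = i - 1` gives
`δ(i) + δ(n - i + 1) = d = δ(n)`.

Conversely, summing the symmetry over `i` gives `2 #E = 2 I(n) = n δ(n)`, and `δ(n)` is the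
minimum degree, since an optimal `(n - 1)`-set omits a vertex of minimum degree. Hence the degree
sum is `n` times the minimum degree, and every degree is minimal.
-/

open Finset
open scoped Classical

/-- Number of edges of `G` with both endpoints in `A`. -/
noncomputable def edgesIn {V : Type*} [Fintype V] (G : SimpleGraph V) (A : Finset V) : ℕ :=
  (G.edgeFinset.filter (fun e => ∀ v ∈ e, v ∈ A)).card

/-- `I_G(m)`: maximum number of induced edges over all `m`-subsets. -/
noncomputable def maxEdgesIn {V : Type*} [Fintype V] (G : SimpleGraph V) (m : ℕ) : ℕ :=
  (Finset.univ.powersetCard m).sup (edgesIn G)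

/-- The `δ`-sequence of `G`. -/
noncomputable def deltaSeq {V : Type*} [Fintype V] (G : SimpleGraph V) (m : ℕ) : ℤ :=
  (maxEdgesIn G m : ℤ) - (maxEdgesIn G (m - 1) : ℤ)

/-- `G` has nested solutions. -/
def hasNS {V : Type*} [Fintype V] (G : SimpleGraph V) : Prop :=
  ∃ A : ℕ → Finset V,
    (∀ i, 1 ≤ i → i < Fintype.card V → A i ⊆ A (i + 1)) ∧
    (∀ i, 1 ≤ i → i ≤ Fintype.card V →
      (A i).card = i ∧ edgesIn G (A i) = maxEdgesIn G i)

/-- `G` is `δ`-dense. -/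
def deltaDense {V : Type*} [Fintype V] (G : SimpleGraph V) : Prop :=
  ∀ i, 2 ≤ i → i ≤ Fintype.card V → deltaSeq G i ≤ deltaSeq G (i - 1) → 2 ≤ deltaSeq G i

/-- The `d`-th cartesian power of `G`. -/
def cartPower {V : Type*} (G : SimpleGraph V) (d : ℕ) : SimpleGraph (Fin d → V) where
  Adj x y := ∃ i, G.Adj (x i) (y i) ∧ ∀ j, j ≠ i → x j = y j
  symm := by
    refine ⟨?_⟩
    rintro x y ⟨i, h, hj⟩
    exact ⟨i, h.symm, fun j hje => (hj j hje).symm⟩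
  loopless := by
    refine ⟨?_⟩
    rintro x ⟨i, h, -⟩
    exact G.loopless.irrefl _ h

/-- The initial segment `{0, …, k-1}` of `Fin N`. -/
def finSeg (N k : ℕ) : Finset (Fin N) :=
  Finset.univ.filter (fun v => (v : ℕ) < k)

/-- The set of the first `m` elements under a (strict total) order `r`. -/
noncomputable def initSeg {α : Type*} [Fintype α] (r : α → α → Prop) (m : ℕ) : Finset α :=
  Finset.univ.filter (fun u => (Finset.univ.filter (fun w => r w u)).card < m)

/-- Strict lexicographic order on tuples. -/
def lexLt {n N : ℕ} (x y : Fin n → Fin N) : Prop :=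
  ∃ i, (∀ j, j < i → x j = y j) ∧ x i < y i

/-- Strict colexicographic order on tuples. -/
def colexLt {n N : ℕ} (x y : Fin n → Fin N) : Prop :=
  ∃ i, (∀ j, i < j → x j = y j) ∧ x i < y i

/-- Strict lexicographic order on pairs. -/
def lexPair {N : ℕ} (p q : Fin N × Fin N) : Prop :=
  p.1 < q.1 ∨ (p.1 = q.1 ∧ p.2 < q.2)

/-- Strict colexicographic order on pairs. -/
def colexPair {N : ℕ} (p q : Fin N × Fin N) : Prop :=
  p.2 < q.2 ∨ (p.2 = q.2 ∧ p.1 < q.1)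

/-- A subset of `Fin M × Fin N` is compressed. -/
def IsCompressed {M N : ℕ} (A : Finset (Fin M × Fin N)) : Prop :=
  (∀ a : Fin M, ∀ y y' : Fin N, (a, y) ∈ A → y' ≤ y → (a, y') ∈ A) ∧
  (∀ b : Fin N, ∀ x x' : Fin M, (x, b) ∈ A → x' ≤ x → (x', b) ∈ A)

/-- Number of boundary edges: edges with exactly one endpoint in `A`. -/
noncomputable def edgesBd {V : Type*} [Fintype V] (G : SimpleGraph V) (A : Finset V) : ℕ :=
  (G.edgeFinset.filter (fun e => ∃ u ∈ e, ∃ v ∈ e, u ∈ A ∧ v ∉ A)).card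

section MaxEdgesIn

variable {V : Type*} [Fintype V] (G : SimpleGraph V)

lemma card_filter_mem_add_ite_eq {e : Sym2 V} (he : ¬e.IsDiag) (A : Finset V) :
    #{v ∈ A | v ∈ e} + (if ∀ v ∈ e, v ∈ Aᶜ then 1 else 0) =
      1 + if ∀ v ∈ e, v ∈ A then 1 else 0 := by
  induction e with
  | _ a b =>
    have hab : a ≠ b := he
    have hfilter : {v ∈ A | v ∈ s(a, b)} = {v ∈ ({a, b} : Finset V) | v ∈ A} := by
      ext v
      simp [and_comm]
    rw [hfilter, filter_insert, filter_singleton]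
    by_cases ha : a ∈ A <;> by_cases hb : b ∈ A <;> simp [ha, hb, hab]

/-- Counting edge endpoints in `A`: inner edges twice, boundary edges once. -/
lemma sum_degree_add_edgesIn_compl (A : Finset V) :
    ∑ v ∈ A, G.degree v + edgesIn G Aᶜ = #G.edgeFinset + edgesIn G A := by
  have hdeg : ∑ v ∈ A, G.degree v = ∑ e ∈ G.edgeFinset, #{v ∈ A | v ∈ e} := by
    simp_rw [← G.card_incidenceFinset_eq_degree, G.incidenceFinset_eq_filter, card_eq_sum_ones,
      sum_filter]
    exact sum_comm
  rw [hdeg, edgesIn, edgesIn, card_filter, card_filter, card_eq_sum_ones, ← sum_add_distrib,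
    ← sum_add_distrib]
  exact sum_congr rfl fun e he =>
    card_filter_mem_add_ite_eq (G.not_isDiag_of_mem_edgeSet (G.mem_edgeFinset.mp he)) A

lemma edgesIn_le_card_edgeFinset (A : Finset V) : edgesIn G A ≤ #G.edgeFinset :=
  card_filter_le _ _

lemma edgesIn_univ : edgesIn G univ = #G.edgeFinset := by
  rw [edgesIn, filter_true_of_mem fun _ _ v _ => mem_univ v]

lemma edgesIn_eq_zero_of_card_le_one {A : Finset V} (hA : #A ≤ 1) : edgesIn G A = 0 := by
  rw [edgesIn, card_eq_zero, filter_eq_empty_iff]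
  intro e he hsub
  induction e with
  | _ a b =>
    exact G.not_isDiag_of_mem_edgeSet (G.mem_edgeFinset.mp he)
      (card_le_one.mp hA a (hsub a (Sym2.mem_mk_left a b)) b (hsub b (Sym2.mem_mk_right a b)))

lemma le_maxEdgesIn (A : Finset V) : edgesIn G A ≤ maxEdgesIn G #A :=
  Finset.le_sup (mem_powersetCard.mpr ⟨subset_univ A, rfl⟩)

lemma maxEdgesIn_le {m B : ℕ} (h : ∀ A : Finset V, #A = m → edgesIn G A ≤ B) :
    maxEdgesIn G m ≤ B :=
  Finset.sup_le fun A hA => h A (mem_powersetCard.mp hA).2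

lemma exists_edgesIn_eq_maxEdgesIn {m : ℕ} (hm : m ≤ Fintype.card V) :
    ∃ A : Finset V, #A = m ∧ edgesIn G A = maxEdgesIn G m := by
  have hne : (univ.powersetCard m : Finset (Finset V)).Nonempty :=
    powersetCard_nonempty.mpr (by rwa [card_univ])
  obtain ⟨A, hA, hsup⟩ := exists_mem_eq_sup _ hne (edgesIn G)
  exact ⟨A, (mem_powersetCard.mp hA).2, hsup.symm⟩

lemma maxEdgesIn_eq_zero_of_le_one {m : ℕ} (hm : m ≤ 1) : maxEdgesIn G m = 0 :=
  Nat.le_zero.mp <| maxEdgesIn_le G fun _ hA => (edgesIn_eq_zero_of_card_le_one G (hA ▸ hm)).le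

lemma maxEdgesIn_card : maxEdgesIn G (Fintype.card V) = #G.edgeFinset :=
  (maxEdgesIn_le G fun A _ => edgesIn_le_card_edgeFinset G A).antisymm
    (by simpa [edgesIn_univ] using le_maxEdgesIn G univ)

lemma deltaSeq_one : deltaSeq G 1 = 0 := by
  simp [deltaSeq, maxEdgesIn_eq_zero_of_le_one]

lemma sum_range_deltaSeq_succ (m : ℕ) : ∑ i ∈ range m, deltaSeq G (i + 1) = maxEdgesIn G m := by
  simp_rw [deltaSeq, Nat.add_sub_cancel]
  rw [sum_range_sub (fun i => (maxEdgesIn G i : ℤ)), maxEdgesIn_eq_zero_of_le_one G zero_le_one,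
    Nat.cast_zero, sub_zero]

end MaxEdgesIn

section Regular

variable {V : Type*} [Fintype V] {G : SimpleGraph V} {d : ℕ}

lemma SimpleGraph.IsRegularOfDegree.card_mul_eq (hreg : G.IsRegularOfDegree d) :
    Fintype.card V * d = 2 * #G.edgeFinset := by
  rw [← G.sum_degrees_eq_twice_card_edges, sum_congr rfl fun v _ => hreg v, sum_const, card_univ,
    smul_eq_mul]

lemma SimpleGraph.IsRegularOfDegree.card_edgeFinset_add_maxEdgesIn_le
    (hreg : G.IsRegularOfDegree d) {m : ℕ} (hm : m ≤ Fintype.card V) :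
    #G.edgeFinset + maxEdgesIn G m ≤ maxEdgesIn G (Fintype.card V - m) + d * m := by
  obtain ⟨A, hAcard, hAmax⟩ := exists_edgesIn_eq_maxEdgesIn G hm
  have hcount := sum_degree_add_edgesIn_compl G A
  rw [sum_congr rfl fun v _ => hreg v, sum_const, smul_eq_mul, hAcard, hAmax] at hcount
  have hcompl := le_maxEdgesIn G Aᶜ
  rw [card_compl, hAcard] at hcompl
  linarith

lemma SimpleGraph.IsRegularOfDegree.maxEdgesIn_card_sub (hreg : G.IsRegularOfDegree d) {m : ℕ}
    (hm : m ≤ Fintype.card V) :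
    (maxEdgesIn G (Fintype.card V - m) : ℤ) = #G.edgeFinset + maxEdgesIn G m - d * m := by
  have hle := hreg.card_edgeFinset_add_maxEdgesIn_le hm
  have hge := hreg.card_edgeFinset_add_maxEdgesIn_le (Nat.sub_le (Fintype.card V) m)
  rw [Nat.sub_sub_self hm] at hge
  have hsum : d * m + d * (Fintype.card V - m) = 2 * #G.edgeFinset := by
    rw [← mul_add, Nat.add_sub_cancel' hm, mul_comm, hreg.card_mul_eq]
  zify at hle hge hsum
  linarith

lemma SimpleGraph.IsRegularOfDegree.deltaSeq_add_deltaSeq (hreg : G.IsRegularOfDegree d) {i : ℕ}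
    (hi1 : 1 ≤ i) (hi2 : i ≤ Fintype.card V) :
    deltaSeq G i + deltaSeq G (Fintype.card V - i + 1) = d := by
  have hi := hreg.maxEdgesIn_card_sub hi2
  have hi' := hreg.maxEdgesIn_card_sub (m := i - 1) (by omega)
  rw [show Fintype.card V - (i - 1) = Fintype.card V - i + 1 by omega] at hi'
  simp only [deltaSeq, Nat.add_sub_cancel]
  rw [hi, hi', Nat.cast_sub hi1]
  ring

end Regular

section MinDegree

variable {V : Type*} [Fintype V] (G : SimpleGraph V)

lemma maxEdgesIn_card_sub_one_add_minDegree [Nonempty V] :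
    maxEdgesIn G (Fintype.card V - 1) + G.minDegree = #G.edgeFinset := by
  have hdelete : ∀ v, edgesIn G {v}ᶜ + G.degree v = #G.edgeFinset := fun v => by
    simpa [edgesIn_eq_zero_of_card_le_one, add_comm] using sum_degree_add_edgesIn_compl G {v}
  obtain ⟨v₀, hv₀⟩ := G.exists_minimal_degree_vertex
  have hle : maxEdgesIn G (Fintype.card V - 1) ≤ edgesIn G {v₀}ᶜ := by
    refine maxEdgesIn_le G fun A hA => ?_
    have hAc : #Aᶜ = 1 := by
      have := Fintype.card_pos (α := V)
      rw [card_compl, hA]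
      omega
    obtain ⟨v, hv⟩ := card_eq_one.mp hAc
    have := G.minDegree_le_degree v
    have := hdelete v
    have := hdelete v₀
    rw [← compl_compl A, hv]
    omega
  have hge := le_maxEdgesIn G {v₀}ᶜ
  rw [card_compl, card_singleton] at hge
  have := hdelete v₀
  omega

lemma deltaSeq_card_eq_minDegree [Nonempty V] : deltaSeq G (Fintype.card V) = G.minDegree := by
  have := maxEdgesIn_card_sub_one_add_minDegree G
  rw [deltaSeq, maxEdgesIn_card]
  omega

lemma two_mul_card_edgeFinset_of_deltaSeq_symm
    (hsym : ∀ i, 1 ≤ i → i ≤ Fintype.card V →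
      deltaSeq G i + deltaSeq G (Fintype.card V - i + 1) = deltaSeq G (Fintype.card V)) :
    2 * (#G.edgeFinset : ℤ) = Fintype.card V * deltaSeq G (Fintype.card V) := by
  set n := Fintype.card V
  have hreflect : ∑ i ∈ range n, deltaSeq G (n - i) = ∑ i ∈ range n, deltaSeq G (i + 1) := by
    rw [← sum_range_reflect]
    exact sum_congr rfl fun i hi => by
      rw [mem_range] at hi
      congr 1
      omega
  have hpair : ∑ i ∈ range n, (deltaSeq G (i + 1) + deltaSeq G (n - i)) = n * deltaSeq G n := by
    rw [sum_congr rfl fun i hi => ?_, sum_const, card_range, nsmul_eq_mul]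
    rw [mem_range] at hi
    simpa [show n - (i + 1) + 1 = n - i by omega] using hsym (i + 1) (by omega) (by omega)
  rw [sum_add_distrib, hreflect, sum_range_deltaSeq_succ, maxEdgesIn_card] at hpair
  linarith

lemma isRegularOfDegree_minDegree_of_two_mul_card_edgeFinset
    (h : 2 * #G.edgeFinset = Fintype.card V * G.minDegree) :
    G.IsRegularOfDegree G.minDegree := by
  have hsum : ∑ _v : V, G.minDegree = ∑ v, G.degree v := by
    rw [G.sum_degrees_eq_twice_card_edges, h, sum_const, card_univ, smul_eq_mul]
  exact fun v => ((sum_eq_sum_iff_of_le fun v _ => G.minDegree_le_degree v).mp hsum v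
    (mem_univ v)).symm

end MinDegree

/-- Bonnet–Sykora.  The `δ`-sequence of `G` is symmetric,
i.e. `δ_G(i) + δ_G(|V| - i + 1) = δ_G(|V|)` for all `i ∈ {1, …, |V|}`, if and
only if `G` is regular. -/
theorem stmt_11 {V : Type*} [Fintype V] (G : SimpleGraph V) :
    (∀ i, 1 ≤ i → i ≤ Fintype.card V →
      deltaSeq G i + deltaSeq G (Fintype.card V - i + 1) = deltaSeq G (Fintype.card V)) ↔
    (∃ n, G.IsRegularOfDegree n) := by
  constructor
  · intro hsym
    cases isEmpty_or_nonempty V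
    · exact ⟨0, .of_isEmpty⟩
    refine ⟨G.minDegree, isRegularOfDegree_minDegree_of_two_mul_card_edgeFinset G ?_⟩
    have h := two_mul_card_edgeFinset_of_deltaSeq_symm G hsym
    rw [deltaSeq_card_eq_minDegree] at h
    exact_mod_cast h
  · rintro ⟨d, hreg⟩ i hi1 hi2
    have hn := hreg.deltaSeq_add_deltaSeq hi1 hi2
    rwa [← hreg.deltaSeq_add_deltaSeq (le_trans hi1 hi2) le_rfl, Nat.sub_self, deltaSeq_one,
      add_zero] at hn
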